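/- Let θ be a steepest-flow trajectory and t0 ≥ 0 with 𝓛(θ(t0)) < 1; assume θ(t) ≠ 0 for all t ≥ t0 and that s ↦ N(θ(s)) and s ↦ log γ̃(θ(s)) are differentiable on (t0, ∞). Then for every t > t0, −(d/dt)𝓛(θ(t)) ≥ L² · γ̃(θ(t0))^{2/L} · 𝓛(θ(t))² · (log(1/𝓛(θ(t))))^{2 − 2/L}. -/

import Mathlib

open Filter

noncomputable section

abbrev E (p : ℕ) : Type := EuclideanSpace ℝ (Fin p)

/-- `N` is a norm on `ℝ^p`. -/
def IsNormOn {p : ℕ} (N : E p → ℝ) : Prop :=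
  (∀ θ, 0 ≤ N θ) ∧ (∀ θ, N θ = 0 ↔ θ = 0) ∧
    (∀ (c : ℝ) (θ : E p), N (c • θ) = |c| * N θ) ∧
    ∀ θ θ' : E p, N (θ + θ') ≤ N θ + N θ'

/-- The dual norm `N_*(z) = sup {⟨z, v⟩ : N v ≤ 1}`. -/
def DualNorm {p : ℕ} (N : E p → ℝ) (z : E p) : ℝ :=
  sSup ((fun v => (inner ℝ z v : ℝ)) '' {v | N v ≤ 1})

/-- The exponential loss `𝓛(θ) = Σ_i exp (-(y_i f(θ, x_i)))`. -/
def ExpLoss {p d m : ℕ} (f : E p → E d → ℝ) (x : Fin m → E d) (y : Fin m → ℝ)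
    (θ : E p) : ℝ :=
  ∑ i, Real.exp (-(y i * f θ (x i)))

/-- A steepest-flow trajectory for the loss `𝓛` with respect to the norm `N`,
with derivative curve `θ'`. -/
def IsSteepestFlow {p : ℕ} (N : E p → ℝ) (𝓛 : E p → ℝ) (θ θ' : ℝ → E p) : Prop :=
  ∀ t, (0:ℝ) ≤ t → HasDerivAt θ (θ' t) t ∧
    (inner ℝ (θ' t) (gradient 𝓛 (θ t)) : ℝ) = -(DualNorm N (gradient 𝓛 (θ t))) ^ 2 ∧
    N (θ' t) = DualNorm N (gradient 𝓛 (θ t))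

/-- The soft margin `γ̃(θ) = -log 𝓛(θ) / N(θ)^L`. -/
def SoftMargin {p : ℕ} (N : E p → ℝ) (𝓛 : E p → ℝ) (L : ℝ) (θ : E p) : ℝ :=
  -Real.log (𝓛 θ) / N θ ^ L

/-- The hard margin `γ(θ) = (min_i y_i f(θ, x_i)) / N(θ)^L`. -/
def HardMargin {p d m : ℕ} (N : E p → ℝ) (f : E p → E d → ℝ) (x : Fin m → E d)
    (y : Fin m → ℝ) (L : ℝ) (θ : E p) : ℝ :=
  (⨅ i, y i * f θ (x i)) / N θ ^ L

/-- The alignment `A(t) = ⟨θ(t)/N(θ(t)), -∇𝓛(θ(t))/N_*(∇𝓛(θ(t)))⟩`. -/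
def FlowAlignment {p : ℕ} (N : E p → ℝ) (𝓛 : E p → ℝ) (θ : ℝ → E p) (t : ℝ) : ℝ :=
  inner ℝ ((N (θ t))⁻¹ • θ t) (-((DualNorm N (gradient 𝓛 (θ t)))⁻¹ • gradient 𝓛 (θ t)))


/-!
Along the flow, `d/dt 𝓛(θ) = -N_*(∇𝓛(θ))²`. Testing the dual norm against `-θ / N(θ)` and using
Euler's identity `⟨∇f, θ⟩ = L f` for homogeneous `f` gives
`N_*(∇𝓛(θ)) ≥ L 𝓛(θ) log (1/𝓛(θ)) / N(θ)`, where the sum over the data is handled by the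
entropy bound `∑ aᵢ e^{-aᵢ} ≥ (∑ e^{-aᵢ}) (-log ∑ e^{-aᵢ})`. Combined with
`d/dt N(θ) ≤ N(θ') = N_*(∇𝓛(θ))`, the same bound shows that
`log γ̃ = log log (1/𝓛) - L log N(θ)` is nondecreasing. Squaring the bound and writing
`N(θ)⁻² = γ̃^{2/L} log (1/𝓛)^{-2/L}` then gives the claim, with `γ̃(θ(t)) ≥ γ̃(θ(t0))`.
-/

namespace IsNormOn

variable {p : ℕ} {N : E p → ℝ}

lemma pos (hN : IsNormOn N) {v : E p} (hv : v ≠ 0) : 0 < N v :=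
  (hN.1 v).lt_of_ne' fun h => hv ((hN.2.1 v).mp h)

lemma sub_le (hN : IsNormOn N) (a b : E p) : N a - N b ≤ N (a - b) := by
  have := hN.2.2.2 (a - b) b
  rw [sub_add_cancel] at this
  linarith

lemma convexOn (hN : IsNormOn N) : ConvexOn ℝ Set.univ N := by
  refine ⟨convex_univ, fun a _ b _ s t hs ht _ => ?_⟩
  calc N (s • a + t • b) ≤ N (s • a) + N (t • b) := hN.2.2.2 _ _
    _ = s • N a + t • N b := by
      rw [hN.2.2.1, hN.2.2.1, abs_of_nonneg hs, abs_of_nonneg ht, smul_eq_mul, smul_eq_mul]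

lemma continuous (hN : IsNormOn N) : Continuous N :=
  continuousOn_univ.mp (hN.convexOn.continuousOn isOpen_univ)

lemma exists_norm_le_mul (hN : IsNormOn N) : ∃ C, ∀ v : E p, ‖v‖ ≤ C * N v := by
  have hinv : ContinuousOn (fun v => (N v)⁻¹) (Metric.sphere (0 : E p) 1) :=
    hN.continuous.continuousOn.inv₀ fun v hv =>
      (hN.pos (ne_zero_of_mem_unit_sphere ⟨v, hv⟩)).ne'
  obtain ⟨C, hC⟩ := (isCompact_sphere (0 : E p) 1).exists_bound_of_continuousOn hinv
  refine ⟨C, fun v => ?_⟩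
  rcases eq_or_ne v 0 with rfl | hv
  · simp [(hN.2.1 0).mpr rfl]
  have hnv : 0 < ‖v‖ := norm_pos_iff.mpr hv
  have hsphere : ‖v‖⁻¹ • v ∈ Metric.sphere (0 : E p) 1 := by
    simp [norm_smul, hnv.ne']
  have hbound := hC _ hsphere
  rw [hN.2.2.1, abs_of_pos (inv_pos.mpr hnv), mul_inv, inv_inv, norm_mul, norm_inv,
    Real.norm_of_nonneg hnv.le, Real.norm_of_nonneg (hN.1 v)] at hbound
  rwa [← div_eq_mul_inv, div_le_iff₀ (hN.pos hv)] at hbound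

lemma inner_le_dualNorm (hN : IsNormOn N) (z : E p) {v : E p} (hv : N v ≤ 1) :
    inner ℝ z v ≤ DualNorm N z := by
  obtain ⟨C, hC⟩ := hN.exists_norm_le_mul
  refine le_csSup ⟨‖z‖ * |C|, ?_⟩ ⟨v, hv, rfl⟩
  rintro _ ⟨w, hw, rfl⟩
  have hCw : C * N w ≤ |C| :=
    calc C * N w ≤ |C| * N w := mul_le_mul_of_nonneg_right (le_abs_self C) (hN.1 w)
      _ ≤ |C| := mul_le_of_le_one_right (abs_nonneg C) hw
  calc inner ℝ z w ≤ ‖z‖ * ‖w‖ := real_inner_le_norm z w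
    _ ≤ ‖z‖ * |C| := mul_le_mul_of_nonneg_left ((hC w).trans hCw) (norm_nonneg z)

lemma deriv_comp_le (hN : IsNormOn N) {θ : ℝ → E p} {v : E p} {t : ℝ}
    (hθ : HasDerivAt θ v t) (hNθ : DifferentiableAt ℝ (fun s => N (θ s)) t) :
    deriv (fun s => N (θ s)) t ≤ N v := by
  refine le_of_tendsto_of_tendsto hNθ.hasDerivAt.tendsto_slope_zero_right
    ((hN.continuous.tendsto v).comp hθ.tendsto_slope_zero_right) ?_
  filter_upwards [self_mem_nhdsWithin] with h (hh : 0 < h)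
  calc h⁻¹ • (N (θ (t + h)) - N (θ t)) ≤ h⁻¹ * N (θ (t + h) - θ t) :=
        mul_le_mul_of_nonneg_left (hN.sub_le _ _) (inv_nonneg.mpr hh.le)
    _ = N (h⁻¹ • (θ (t + h) - θ t)) := by rw [hN.2.2.1, abs_of_pos (inv_pos.mpr hh)]

end IsNormOn

lemma inner_gradient_self_eq_of_hasDerivAt {F : Type*} [NormedAddCommGroup F]
    [InnerProductSpace ℝ F] [CompleteSpace F] {g : F → ℝ} {θ : F} {g' : ℝ}
    (hg : DifferentiableAt ℝ g θ) (h : HasDerivAt (fun c : ℝ => g (c • θ)) g' 1) :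
    inner ℝ (gradient g θ) θ = g' := by
  have hsmul : HasDerivAt (fun c : ℝ => c • θ) θ 1 := by
    simpa using (hasDerivAt_id (1 : ℝ)).smul_const θ
  have hg1 : HasFDerivAt g (InnerProductSpace.toDual ℝ F (gradient g θ)) ((1 : ℝ) • θ) := by
    rw [one_smul]
    exact hg.hasGradientAt.hasFDerivAt
  simpa using (hg1.comp_hasDerivAt 1 hsmul).unique h

lemma sum_exp_neg_mul_neg_log_le {ι : Type*} [Fintype ι] (a : ι → ℝ) :
    (∑ i, Real.exp (-a i)) * -Real.log (∑ i, Real.exp (-a i)) ≤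
      ∑ i, a i * Real.exp (-a i) := by
  set S := ∑ i, Real.exp (-a i)
  have hterm : ∀ i, -Real.log S ≤ a i := fun i => by
    have hle : Real.exp (-a i) ≤ S :=
      Finset.single_le_sum (fun j _ => (Real.exp_pos (-a j)).le) (Finset.mem_univ i)
    have := Real.log_le_log (Real.exp_pos _) hle
    rw [Real.log_exp] at this
    linarith
  calc S * -Real.log S = ∑ i, -Real.log S * Real.exp (-a i) := by
        rw [← Finset.mul_sum, mul_comm]
    _ ≤ ∑ i, a i * Real.exp (-a i) :=
      Finset.sum_le_sum fun i _ => mul_le_mul_of_nonneg_right (hterm i) (Real.exp_pos _).le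

section ExpLoss

variable {p d m : ℕ} {f : E p → E d → ℝ} {x : Fin m → E d} {y : Fin m → ℝ}

lemma expLoss_pos (hm : 0 < m) (θ : E p) : 0 < ExpLoss f x y θ :=
  Finset.sum_pos (fun _ _ => Real.exp_pos _) (Finset.univ_nonempty_iff.mpr ⟨⟨0, hm⟩⟩)

lemma differentiable_expLoss (hf : ∀ x' : E d, Differentiable ℝ fun θ => f θ x') :
    Differentiable ℝ (ExpLoss f x y) :=
  Differentiable.fun_sum fun i _ => (((hf (x i)).const_mul (y i)).neg).exp

lemma hasDerivAt_expLoss_smul {L : ℝ}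
    (hhom : ∀ c : ℝ, 0 < c → ∀ (θ : E p) (x' : E d), f (c • θ) x' = c ^ L * f θ x')
    (θ : E p) :
    HasDerivAt (fun c : ℝ => ExpLoss f x y (c • θ))
      (-(L * ∑ i, y i * f θ (x i) * Real.exp (-(y i * f θ (x i))))) 1 := by
  set a : Fin m → ℝ := fun i => y i * f θ (x i)
  have hterm : ∀ i, HasDerivAt (fun c : ℝ => Real.exp (-(c ^ L * a i)))
      (-(L * (a i * Real.exp (-a i)))) 1 := fun i => by
    have hpow : HasDerivAt (fun c : ℝ => c ^ L) L 1 := by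
      simpa using Real.hasDerivAt_rpow_const (x := 1) (p := L) (Or.inl one_ne_zero)
    convert ((hpow.mul_const (a i)).fun_neg).exp using 1
    rw [Real.one_rpow, one_mul]
    ring
  have heq : (fun c : ℝ => ExpLoss f x y (c • θ)) =ᶠ[nhds 1]
      fun c => ∑ i, Real.exp (-(c ^ L * a i)) := by
    filter_upwards [Ioi_mem_nhds one_pos] with c hc
    simp only [ExpLoss, a, hhom c hc, mul_left_comm]
  rw [Finset.mul_sum, ← Finset.sum_neg_distrib]
  simpa only [a, mul_assoc] using (HasDerivAt.fun_sum fun i _ => hterm i).congr_of_eventuallyEq heq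

lemma inner_gradient_expLoss_self {L : ℝ}
    (hf : ∀ x' : E d, Differentiable ℝ fun θ => f θ x')
    (hhom : ∀ c : ℝ, 0 < c → ∀ (θ : E p) (x' : E d), f (c • θ) x' = c ^ L * f θ x')
    (θ : E p) :
    inner ℝ (gradient (ExpLoss f x y) θ) θ =
      -(L * ∑ i, y i * f θ (x i) * Real.exp (-(y i * f θ (x i)))) :=
  inner_gradient_self_eq_of_hasDerivAt (differentiable_expLoss hf θ)
    (hasDerivAt_expLoss_smul hhom θ)

lemma le_dualNorm_gradient_expLoss {L : ℝ} (hL : 0 ≤ L)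
    (hf : ∀ x' : E d, Differentiable ℝ fun θ => f θ x')
    (hhom : ∀ c : ℝ, 0 < c → ∀ (θ : E p) (x' : E d), f (c • θ) x' = c ^ L * f θ x')
    {N : E p → ℝ} (hN : IsNormOn N) {θ : E p} (hθ : θ ≠ 0) :
    L * (ExpLoss f x y θ * -Real.log (ExpLoss f x y θ)) / N θ ≤
      DualNorm N (gradient (ExpLoss f x y) θ) := by
  have hNθ := hN.pos hθ
  have hv : N (-(N θ)⁻¹ • θ) ≤ 1 := by
    rw [hN.2.2.1, abs_neg, abs_of_pos (inv_pos.mpr hNθ), inv_mul_cancel₀ hNθ.ne']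
  refine le_trans ?_ (hN.inner_le_dualNorm _ hv)
  rw [real_inner_smul_right, inner_gradient_expLoss_self hf hhom, neg_mul_neg, div_eq_inv_mul]
  gcongr
  exact sum_exp_neg_mul_neg_log_le fun i => y i * f θ (x i)

end ExpLoss

namespace IsSteepestFlow

variable {p : ℕ} {N 𝓛 : E p → ℝ} {θ θ' : ℝ → E p}

lemma hasDerivAt_comp (hflow : IsSteepestFlow N 𝓛 θ θ') {t : ℝ} (ht : 0 ≤ t)
    (h𝓛 : DifferentiableAt ℝ 𝓛 (θ t)) :
    HasDerivAt (fun s => 𝓛 (θ s)) (-DualNorm N (gradient 𝓛 (θ t)) ^ 2) t := by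
  obtain ⟨hθ, hinner, -⟩ := hflow t ht
  have := h𝓛.hasGradientAt.hasFDerivAt.comp_hasDerivAt t hθ
  rwa [InnerProductSpace.toDual_apply_apply, real_inner_comm, hinner] at this

lemma antitoneOn (hflow : IsSteepestFlow N 𝓛 θ θ') (h𝓛 : Differentiable ℝ 𝓛) :
    AntitoneOn (fun s => 𝓛 (θ s)) (Set.Ici 0) := by
  have hderiv : ∀ s ∈ Set.Ici (0 : ℝ), HasDerivAt (fun s => 𝓛 (θ s)) _ s :=
    fun s hs => hflow.hasDerivAt_comp hs (h𝓛 _)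
  refine antitoneOn_of_deriv_nonpos (convex_Ici 0)
    (fun s hs => (hderiv s hs).continuousAt.continuousWithinAt)
    (fun s hs => (hderiv s (interior_subset hs)).differentiableAt.differentiableWithinAt)
    fun s hs => ?_
  rw [(hderiv s (interior_subset hs)).deriv, neg_nonpos]
  exact sq_nonneg _

end IsSteepestFlow

lemma softMargin_eq_exp {p : ℕ} {N 𝓛 : E p → ℝ} {L : ℝ} {θ : E p}
    (hloss : 0 < -Real.log (𝓛 θ)) (hN : 0 < N θ) :
    SoftMargin N 𝓛 L θ = Real.exp (Real.log (-Real.log (𝓛 θ)) - L * Real.log (N θ)) := by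
  rw [Real.exp_sub, Real.exp_log hloss, mul_comm, ← Real.rpow_def_of_pos hN, SoftMargin]

lemma softMargin_rpow_mul_neg_log_rpow {p : ℕ} {N 𝓛 : E p → ℝ} {L : ℝ} (hL : L ≠ 0)
    {θ : E p} (hloss : 0 < -Real.log (𝓛 θ)) (hN : 0 < N θ) :
    SoftMargin N 𝓛 L θ ^ (2 / L) * (-Real.log (𝓛 θ)) ^ (2 - 2 / L) =
      (-Real.log (𝓛 θ) / N θ) ^ 2 := by
  rw [SoftMargin, Real.div_rpow hloss.le (Real.rpow_nonneg hN.le L), ← Real.rpow_mul hN.le,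
    mul_div_cancel₀ _ hL, div_mul_eq_mul_div, ← Real.rpow_add hloss, add_sub_cancel,
    Real.rpow_two, Real.rpow_two, div_pow]

section SoftMargin

variable {p d m : ℕ} {f : E p → E d → ℝ} {x : Fin m → E d} {y : Fin m → ℝ} {L : ℝ}
  {N : E p → ℝ} {θ θ' : ℝ → E p}

lemma IsSteepestFlow.mul_deriv_norm_div_le (hL : 0 ≤ L)
    (hf : ∀ x' : E d, Differentiable ℝ fun θ => f θ x')
    (hhom : ∀ c : ℝ, 0 < c → ∀ (θ : E p) (x' : E d), f (c • θ) x' = c ^ L * f θ x')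
    (hN : IsNormOn N) (hflow : IsSteepestFlow N (ExpLoss f x y) θ θ') {s : ℝ} (hs : 0 ≤ s)
    (hθs : θ s ≠ 0) (hNθ : DifferentiableAt ℝ (fun r => N (θ r)) s)
    (hu : 0 < ExpLoss f x y (θ s)) (hw : 0 < -Real.log (ExpLoss f x y (θ s))) :
    L * (deriv (fun r => N (θ r)) s / N (θ s)) ≤
      DualNorm N (gradient (ExpLoss f x y) (θ s)) ^ 2 / ExpLoss f x y (θ s) /
        -Real.log (ExpLoss f x y (θ s)) := by
  set D := DualNorm N (gradient (ExpLoss f x y) (θ s))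
  have hD : L * (ExpLoss f x y (θ s) * -Real.log (ExpLoss f x y (θ s))) / N (θ s) ≤ D :=
    le_dualNorm_gradient_expLoss hL hf hhom hN hθs
  have hν : deriv (fun r => N (θ r)) s ≤ D :=
    (hN.deriv_comp_le (hflow s hs).1 hNθ).trans_eq (hflow s hs).2.2
  set u := ExpLoss f x y (θ s)
  have hNs := hN.pos hθs
  have hD0 : 0 ≤ D := le_trans (by positivity) hD
  have hlog : Real.log u ≠ 0 := (neg_pos.mp hw).ne
  calc L * (deriv (fun r => N (θ r)) s / N (θ s)) ≤ L * (D / N (θ s)) := by gcongr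
    _ = L * (u * -Real.log u) / N (θ s) * D / (u * -Real.log u) := by field_simp
    _ ≤ D * D / (u * -Real.log u) := by gcongr
    _ = D ^ 2 / u / -Real.log u := by rw [← sq, div_div]

lemma IsSteepestFlow.neg_log_expLoss_pos (hm : 0 < m)
    (hf : ∀ x' : E d, Differentiable ℝ fun θ => f θ x')
    (hflow : IsSteepestFlow N (ExpLoss f x y) θ θ') {t0 : ℝ} (ht0 : 0 ≤ t0)
    (hsep : ExpLoss f x y (θ t0) < 1) {s : ℝ} (hs : t0 ≤ s) :
    0 < -Real.log (ExpLoss f x y (θ s)) :=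
  neg_pos.mpr <| Real.log_neg (expLoss_pos hm _) <|
    (hflow.antitoneOn (differentiable_expLoss hf) ht0 (ht0.trans hs) hs).trans_lt hsep

lemma IsSteepestFlow.monotoneOn_softMargin (hm : 0 < m) (hL : 0 ≤ L)
    (hf : ∀ x' : E d, Differentiable ℝ fun θ => f θ x')
    (hhom : ∀ c : ℝ, 0 < c → ∀ (θ : E p) (x' : E d), f (c • θ) x' = c ^ L * f θ x')
    (hN : IsNormOn N) (hflow : IsSteepestFlow N (ExpLoss f x y) θ θ') {t0 : ℝ} (ht0 : 0 ≤ t0)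
    (hsep : ExpLoss f x y (θ t0) < 1) (hθ0 : ∀ t, t0 ≤ t → θ t ≠ 0)
    (hNdiff : ∀ t ∈ Set.Ioi t0, DifferentiableAt ℝ (fun s => N (θ s)) t) :
    MonotoneOn (fun s => SoftMargin N (ExpLoss f x y) L (θ s)) (Set.Ici t0) := by
  set 𝓛 := ExpLoss f x y
  have hu : ∀ s, 0 < 𝓛 (θ s) := fun s => expLoss_pos hm (θ s)
  have h𝓛 : ∀ s ∈ Set.Ici t0, HasDerivAt (fun r => 𝓛 (θ r)) _ s :=
    fun s hs => hflow.hasDerivAt_comp (ht0.trans hs) (differentiable_expLoss hf _)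
  have hw : ∀ s ∈ Set.Ici t0, 0 < -Real.log (𝓛 (θ s)) :=
    fun s hs => hflow.neg_log_expLoss_pos hm hf ht0 hsep hs
  have hNpos : ∀ s ∈ Set.Ici t0, 0 < N (θ s) := fun s hs => hN.pos (hθ0 s hs)
  set ψ := fun s => Real.log (-Real.log (𝓛 (θ s))) - L * Real.log (N (θ s))
  have hψ : ∀ s ∈ Set.Ioi t0, HasDerivAt ψ
      (DualNorm N (gradient 𝓛 (θ s)) ^ 2 / 𝓛 (θ s) / -Real.log (𝓛 (θ s)) -
        L * (deriv (fun r => N (θ r)) s / N (θ s))) s := fun s hs => by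
    have hs' := Set.Ioi_subset_Ici_self hs
    have hlog := ((h𝓛 s hs').log (hu s).ne').fun_neg.log (hw s hs').ne'
    simp only [neg_div, neg_neg] at hlog
    exact hlog.sub (((hNdiff s hs).hasDerivAt.log (hNpos s hs').ne').const_mul L)
  have hψmono : MonotoneOn ψ (Set.Ici t0) := by
    refine monotoneOn_of_deriv_nonneg (convex_Ici t0) (fun s hs => ?_)
      (fun s hs => ?_) (fun s hs => ?_)
    · have hθs := ((hflow s (ht0.trans hs)).1).continuousAt
      exact ((((h𝓛 s hs).continuousAt.log (hu s).ne').neg.log (hw s hs).ne').sub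
        (((hN.continuous.continuousAt.comp hθs).log (hNpos s hs).ne').const_mul L))
        |>.continuousWithinAt
    · rw [interior_Ici] at hs
      exact (hψ s hs).differentiableAt.differentiableWithinAt
    · rw [interior_Ici] at hs
      have hs' := Set.Ioi_subset_Ici_self hs
      rw [(hψ s hs).deriv, sub_nonneg]
      exact hflow.mul_deriv_norm_div_le hL hf hhom hN (ht0.trans hs') (hθ0 s hs') (hNdiff s hs)
        (hu s) (hw s hs')
  intro a ha b hb hab
  simp only [softMargin_eq_exp (hw a ha) (hNpos a ha), softMargin_eq_exp (hw b hb) (hNpos b hb)]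
  exact Real.exp_le_exp.mpr (hψmono ha hb hab)

end SoftMargin

theorem stmt_15_general {p d m : ℕ} (hm : 0 < m)
    (x : Fin m → E d) (y : Fin m → ℝ)
    (L : ℝ) (hL : 0 < L) (f : E p → E d → ℝ)
    (hf : ∀ x' : E d, ContDiff ℝ 1 fun θ => f θ x')
    (hhom : ∀ c : ℝ, 0 < c → ∀ (θ : E p) (x' : E d), f (c • θ) x' = c ^ L * f θ x')
    (N : E p → ℝ) (hN : IsNormOn N)
    (θ θ' : ℝ → E p) (hflow : IsSteepestFlow N (ExpLoss f x y) θ θ')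
    (t0 : ℝ) (ht0 : 0 ≤ t0) (hsep : ExpLoss f x y (θ t0) < 1)
    (hθ0 : ∀ t, t0 ≤ t → θ t ≠ 0)
    (hNdiff : ∀ t ∈ Set.Ioi t0, DifferentiableAt ℝ (fun s => N (θ s)) t) :
    ∀ t, t0 < t →
      -(deriv (fun s => ExpLoss f x y (θ s)) t) ≥
        L ^ 2 * SoftMargin N (ExpLoss f x y) L (θ t0) ^ ((2:ℝ) / L) *
          ExpLoss f x y (θ t) ^ 2 *
          Real.log (1 / ExpLoss f x y (θ t)) ^ (2 - (2:ℝ) / L) := by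
  intro t ht
  have hf' : ∀ x' : E d, Differentiable ℝ fun θ => f θ x' :=
    fun x' => (hf x').differentiable one_ne_zero
  have hu : 0 < ExpLoss f x y (θ t) := expLoss_pos hm _
  have hw := hflow.neg_log_expLoss_pos hm hf' ht0 hsep ht.le
  have hNt := hN.pos (hθ0 t ht.le)
  have hγ0 : 0 < SoftMargin N (ExpLoss f x y) L (θ t0) :=
    div_pos (hflow.neg_log_expLoss_pos hm hf' ht0 hsep le_rfl)
      (Real.rpow_pos_of_pos (hN.pos (hθ0 t0 le_rfl)) L)
  have hγ := hflow.monotoneOn_softMargin hm hL.le hf' hhom hN ht0 hsep hθ0 hNdiff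
    Set.self_mem_Ici ht.le ht.le
  rw [(hflow.hasDerivAt_comp (ht0.trans ht.le) (differentiable_expLoss hf' _)).deriv, neg_neg,
    one_div, Real.log_inv, ge_iff_le]
  set u := ExpLoss f x y (θ t)
  calc L ^ 2 * SoftMargin N (ExpLoss f x y) L (θ t0) ^ (2 / L) * u ^ 2 *
        (-Real.log u) ^ (2 - 2 / L)
      ≤ L ^ 2 * SoftMargin N (ExpLoss f x y) L (θ t) ^ (2 / L) * u ^ 2 *
        (-Real.log u) ^ (2 - 2 / L) := by gcongr
    _ = (L * (u * -Real.log u) / N (θ t)) ^ 2 := by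
      linear_combination
        L ^ 2 * u ^ 2 * softMargin_rpow_mul_neg_log_rpow (𝓛 := ExpLoss f x y) hL.ne' hw hNt
    _ ≤ DualNorm N (gradient (ExpLoss f x y) (θ t)) ^ 2 :=
      pow_le_pow_left₀ (by positivity)
        (le_dualNorm_gradient_expLoss hL.le hf' hhom hN (hθ0 t ht.le)) 2

theorem stmt_15 {p d m : ℕ} (hp : 0 < p) (hd : 0 < d) (hm : 0 < m)
    (x : Fin m → E d) (y : Fin m → ℝ) (hy : ∀ i, y i = 1 ∨ y i = -1)
    (L : ℝ) (hL : 0 < L) (f : E p → E d → ℝ)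
    (hf : ∀ x' : E d, ContDiff ℝ 1 fun θ => f θ x')
    (hhom : ∀ c : ℝ, 0 < c → ∀ (θ : E p) (x' : E d), f (c • θ) x' = c ^ L * f θ x')
    (N : E p → ℝ) (hN : IsNormOn N)
    (θ θ' : ℝ → E p) (hflow : IsSteepestFlow N (ExpLoss f x y) θ θ')
    (t0 : ℝ) (ht0 : 0 ≤ t0) (hsep : ExpLoss f x y (θ t0) < 1)
    (hθ0 : ∀ t, t0 ≤ t → θ t ≠ 0)
    (hNdiff : ∀ t ∈ Set.Ioi t0, DifferentiableAt ℝ (fun s => N (θ s)) t)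
    (hγdiff : ∀ t ∈ Set.Ioi t0, DifferentiableAt ℝ
      (fun s => Real.log (SoftMargin N (ExpLoss f x y) L (θ s))) t) :
    ∀ t, t0 < t →
      -(deriv (fun s => ExpLoss f x y (θ s)) t) ≥
        L ^ 2 * SoftMargin N (ExpLoss f x y) L (θ t0) ^ ((2:ℝ) / L) *
          ExpLoss f x y (θ t) ^ 2 *
          Real.log (1 / ExpLoss f x y (θ t)) ^ (2 - (2:ℝ) / L) :=
  stmt_15_general hm x y L hL f hf hhom N hN θ θ' hflow t0 ht0 hsep hθ0 hNdiff
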